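/- arXiv:2507.01303 — 2 statements merged into one kernel-verified Lean document; each statement's English description precedes it below -/
import Mathlib

section
/- Let P be a poset, and let I and J be distinct intervals in P. Let g : M(I) → M(J) and h : M(J) → M(I) be morphisms of persistence modules. Then h ∘ g = 0. -/
universe u v w w'

/-- A persistence module indexed by a poset `P`, over a field `k`. -/
structure PersMod (k : Type u) [Field k] (P : Type v) [PartialOrder P] :
    Type (max u v (w + 1)) where
  space : P → Type w
  [acg : ∀ x, AddCommGroup (space x)]
  [mod : ∀ x, Module k (space x)]
  map : ∀ {x y : P}, x ≤ y → (space x →ₗ[k] space y)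
  map_id : ∀ x : P, map (le_refl x) = LinearMap.id
  map_comp : ∀ {x y z : P} (hxy : x ≤ y) (hyz : y ≤ z),
    (map hyz).comp (map hxy) = map (hxy.trans hyz)

attribute [instance] PersMod.acg PersMod.mod

variable (k : Type u) [Field k] {P : Type v} [PartialOrder P]

/-- A morphism of persistence modules (a natural transformation). -/
structure PersHom (V : PersMod.{u, v, w} k P) (W : PersMod.{u, v, w'} k P) where
  app : ∀ x : P, V.space x →ₗ[k] W.space x
  natural : ∀ {x y : P} (h : x ≤ y) (v : V.space x),
    app y (V.map h v) = W.map h (app x v)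

/-- An isomorphism of persistence modules. -/
structure PersIso (V : PersMod.{u, v, w} k P) (W : PersMod.{u, v, w'} k P) where
  app : ∀ x : P, V.space x ≃ₗ[k] W.space x
  natural : ∀ {x y : P} (h : x ≤ y) (v : V.space x),
    app y (V.map h v) = W.map h (app x v)

/-- A subset `I` of a poset is convex if `x ≤ y ≤ z`, `x ∈ I`, `z ∈ I` imply `y ∈ I`. -/
def IsConvexIn (I : Set P) : Prop :=
  ∀ ⦃x y z : P⦄, x ∈ I → z ∈ I → x ≤ y → y ≤ z → y ∈ I

/-- A subset `I` of a poset is connected if any two points of `I` are joined by a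
zigzag path inside `I`. -/
def IsConnectedIn (I : Set P) : Prop :=
  ∀ x ∈ I, ∀ z ∈ I, ∃ (n : ℕ) (c : ℕ → P), (∀ i ≤ n, c i ∈ I) ∧ c 0 = x ∧ c n = z ∧
    ∀ i < n, c i ≤ c (i + 1) ∨ c (i + 1) ≤ c i

/-- An interval in a poset: nonempty, convex and connected. -/
def IsPosetInterval (I : Set P) : Prop :=
  I.Nonempty ∧ IsConvexIn I ∧ IsConnectedIn I

open Classical in
/-- The subspace of `k` used as the value of the constant module at `x`. -/
noncomputable def constSub (I : Set P) (x : P) : Submodule k k :=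
  if x ∈ I then ⊤ else ⊥

open Classical in
/-- The structure map of the constant module. -/
noncomputable def constMap (I : Set P) (x y : P) :
    constSub k I x →ₗ[k] constSub k I y :=
  LinearMap.codRestrict (constSub k I y)
    ((if y ∈ I then (LinearMap.id : k →ₗ[k] k) else 0).comp (constSub k I x).subtype)
    (fun c => by
      by_cases hy : y ∈ I
      · simp [constSub, hy]
      · simp only [constSub, hy, ↓reduceIte, LinearMap.zero_comp]
        exact Submodule.zero_mem _)

open Classical in
/-- The constant (interval) module `M(I)` attached to a convex subset `I`. -/
noncomputable def constMod (I : Set P) (hI : IsConvexIn I) : PersMod.{u, v, u} k P where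
  space x := constSub k I x
  map {x y} _ := constMap k I x y
  map_id := fun x => by
    ext c
    by_cases hx : x ∈ I
    · simp [constMap, hx]
    · have hc : (c : k) = 0 := by
        have := c.2
        simp only [constSub, hx, ↓reduceIte] at this
        exact (Submodule.mem_bot k).1 this
      simp [constMap, hx, hc]
  map_comp := fun {x y z} hxy hyz => by
    ext c
    by_cases hz : z ∈ I
    · by_cases hy : y ∈ I
      · simp [constMap, hy, hz]
      · have hx : x ∉ I := fun hx => hy (hI hx hz hxy hyz)
        have hc : (c : k) = 0 := by
          have := c.2
          simp only [constSub, hx, ↓reduceIte] at this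
          exact (Submodule.mem_bot k).1 this
        simp [constMap, hy, hz, hc]
    · simp [constMap, hz]

/-- A submodule of a persistence module: a family of subspaces preserved by the
structure maps. -/
structure PersSubmod (V : PersMod.{u, v, w} k P) where
  carrier : ∀ x : P, Submodule k (V.space x)
  mapLe : ∀ {x y : P} (h : x ≤ y), ∀ v ∈ carrier x, V.map h v ∈ carrier y

/-- A submodule of a persistence module, viewed as a persistence module in its own
right. -/
def PersSubmod.toPersMod {V : PersMod.{u, v, w} k P} (U : PersSubmod k V) :
    PersMod.{u, v, w} k P where
  space x := U.carrier x
  map {x y} h := (V.map h).restrict (U.mapLe h)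
  map_id := fun x => by
    ext c
    simp [LinearMap.restrict_apply, V.map_id]
  map_comp := fun {x y z} hxy hyz => by
    ext c
    have := LinearMap.congr_fun (V.map_comp hxy hyz) (c : V.space x)
    simpa [LinearMap.restrict_apply] using this

/-- A persistence module is an interval module if it is isomorphic to a constant
module `M(I)` for some interval `I`. -/
def IsIntervalModule (V : PersMod.{u, v, w} k P) : Prop :=
  ∃ (I : Set P) (hI : IsPosetInterval I), Nonempty (PersIso k V (constMod k I hI.2.1))

/-- `A` is an internal direct sum decomposition of `V`:
at each point the subspaces are independent and span everything. -/
def IsDecomp (V : PersMod.{u, v, w} k P) (A : Set (PersSubmod k V)) : Prop :=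
  ∀ x : P, iSupIndep (fun U : A => (U : PersSubmod k V).carrier x) ∧
    ⨆ U : A, (U : PersSubmod k V).carrier x = ⊤

/-- An interval decomposition of `V`. -/
def IsIntervalDecomp (V : PersMod.{u, v, w} k P) (A : Set (PersSubmod k V)) : Prop :=
  IsDecomp k V A ∧ ∀ U ∈ A, IsIntervalModule k U.toPersMod

/-- `V` has an interval decomposition. -/
def HasIntervalDecomp (V : PersMod.{u, v, w} k P) : Prop :=
  ∃ A : Set (PersSubmod k V), IsIntervalDecomp k V A

/-!
An endomorphism of `M(I)` acts at each `x ∈ I` as multiplication by a scalar, and naturality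
along the zigzags inside `I` forces this scalar to be the same at all points of `I`. The
composite `h ∘ g` vanishes at points of `I \ J`, since it factors through `M(J)_x = 0`, so if
it is nonzero then `I ⊆ J`. At a point of `I ∩ J` the scalars of `h ∘ g` and `g ∘ h` are both
the product of those of `g` and `h`, so `g ∘ h` is nonzero too and `J ⊆ I`, i.e. `I = J`.
-/

universe w''

section Connected

variable {P : Type v} [PartialOrder P]

theorem IsConnectedIn.apply_eq_of_le {α : Sort*} {I : Set P} (hI : IsConnectedIn I)
    (f : I → α) (hf : ∀ x y : I, (x : P) ≤ y → f x = f y) (x y : I) : f x = f y := by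
  obtain ⟨n, c, hc, hc0, hcn, hstep⟩ := hI x x.2 y y.2
  have hchain : ∀ i (hi : i ≤ n), f x = f ⟨c i, hc i hi⟩ := by
    intro i
    induction i with
    | zero => exact fun _ => congrArg f (Subtype.ext hc0.symm)
    | succ i ih =>
      intro hi
      rw [ih (by omega)]
      rcases hstep i hi with hle | hle
      · exact hf _ _ hle
      · exact (hf _ _ hle).symm
  rw [hchain n le_rfl]
  exact congrArg f (Subtype.ext hcn)

end Connected

section PersHom

variable {k : Type u} [Field k] {P : Type v} [PartialOrder P]

def PersHom.comp {U : PersMod.{u, v, w} k P} {V : PersMod.{u, v, w'} k P}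
    {W : PersMod.{u, v, w''} k P} (g : PersHom k V W) (f : PersHom k U V) :
    PersHom k U W where
  app x := (g.app x).comp (f.app x)
  natural hxy v := by
    simp only [LinearMap.comp_apply, f.natural hxy v, g.natural hxy (f.app _ v)]

end PersHom

section ConstSub

variable {k : Type u} [Field k] {P : Type v} {I : Set P} {x y : P}

theorem constSub_eq_zero (hx : x ∉ I) (v : constSub k I x) : v = 0 := by
  have hv := v.2
  simp only [constSub, if_neg hx, Submodule.mem_bot] at hv
  exact Subtype.ext hv

variable (k) in
noncomputable def constOne (I : Set P) (hx : x ∈ I) : constSub k I x :=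
  ⟨1, by simp [constSub, hx]⟩

@[simp]
theorem coe_constOne (hx : x ∈ I) : (constOne k I hx : k) = 1 :=
  rfl

theorem eq_smul_constOne (hx : x ∈ I) (v : constSub k I x) :
    v = (v : k) • constOne k I hx :=
  Subtype.ext (by simp)

theorem LinearMap.apply_eq_smul_constOne {M : Type*} [AddCommGroup M] [Module k M]
    (f : constSub k I x →ₗ[k] M) (hx : x ∈ I) (v : constSub k I x) :
    f v = (v : k) • f (constOne k I hx) := by
  conv_lhs => rw [eq_smul_constOne hx v]
  exact map_smul f _ _

theorem coe_constMap_of_mem (hy : y ∈ I) (v : constSub k I x) :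
    (constMap k I x y v : k) = v := by
  simp [constMap, hy]

end ConstSub

section ConstMod

variable {k : Type u} [Field k] {P : Type v} [PartialOrder P] {I J : Set P} {x y : P}

theorem constMod_map_constOne (hcI : IsConvexIn I) (hxy : x ≤ y) (hx : x ∈ I) (hy : y ∈ I) :
    (constMod k I hcI).map hxy (constOne k I hx) = constOne k I hy :=
  Subtype.ext (coe_constMap_of_mem hy _)

variable {hcI : IsConvexIn I} {hcJ : IsConvexIn J}

noncomputable def PersHom.coeff (φ : PersHom k (constMod k I hcI) (constMod k J hcJ))
    (hx : x ∈ I) : k :=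
  Subtype.val (φ.app x (constOne k I hx))

theorem PersHom.app_eq_zero_of_coeff_eq_zero
    (φ : PersHom k (constMod k I hcI) (constMod k J hcJ)) (hx : x ∈ I) (h0 : φ.coeff hx = 0)
    (v : (constMod k I hcI).space x) : φ.app x v = 0 :=
  (LinearMap.apply_eq_smul_constOne (φ.app x) hx v).trans
      (smul_eq_zero_of_right _ (Subtype.ext h0))

theorem PersHom.coeff_eq_of_le (φ : PersHom k (constMod k I hcI) (constMod k J hcJ))
    (hxy : x ≤ y) (hx : x ∈ I) (hy : y ∈ I) (hyJ : y ∈ J) :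
    φ.coeff hy = φ.coeff hx := by
  have hnat := φ.natural hxy (constOne k I hx)
  rw [constMod_map_constOne hcI hxy hx hy] at hnat
  exact (congrArg Subtype.val hnat).trans (coe_constMap_of_mem hyJ _)

theorem PersHom.coeff_eq (hI : IsConnectedIn I)
    (φ : PersHom k (constMod k I hcI) (constMod k I hcI)) (hx : x ∈ I) (hy : y ∈ I) :
    φ.coeff hx = φ.coeff hy :=
  hI.apply_eq_of_le (fun z : I => φ.coeff z.2)
    (fun a b hab => (φ.coeff_eq_of_le hab a.2 b.2 b.2).symm) ⟨x, hx⟩ ⟨y, hy⟩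

theorem PersHom.coeff_comp (g : PersHom k (constMod k I hcI) (constMod k J hcJ))
    (h : PersHom k (constMod k J hcJ) (constMod k I hcI)) (hxI : x ∈ I) (hxJ : x ∈ J) :
    (h.comp g).coeff hxI = g.coeff hxI * h.coeff hxJ :=
  congrArg Subtype.val
    (LinearMap.apply_eq_smul_constOne (h.app x) hxJ (g.app x (constOne k I hxI)))

theorem PersHom.subset_of_coeff_comp_ne_zero (hI : IsConnectedIn I)
    (g : PersHom k (constMod k I hcI) (constMod k J hcJ))
    (h : PersHom k (constMod k J hcJ) (constMod k I hcI)) (hx : x ∈ I)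
    (hne : (h.comp g).coeff hx ≠ 0) : I ⊆ J := by
  intro y hy
  by_contra hyJ
  refine hne (((h.comp g).coeff_eq hI hx hy).trans ?_)
  have hg : g.app y (constOne k I hy) = 0 := constSub_eq_zero hyJ _
  exact congrArg Subtype.val ((congrArg (h.app y) hg).trans (map_zero _))

end ConstMod

/-- If `I` and `J` are distinct intervals, `g : M(I) → M(J)` and `h : M(J) → M(I)`
are morphisms, then `h ∘ g = 0`. -/
theorem comp_eq_zero_of_distinct_intervals (P : Type v) [PartialOrder P]
    (I J : Set P) (hI : IsPosetInterval I) (hJ : IsPosetInterval J) (hIJ : I ≠ J)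
    (g : PersHom k (constMod k I hI.2.1) (constMod k J hJ.2.1))
    (h : PersHom k (constMod k J hJ.2.1) (constMod k I hI.2.1)) :
    ∀ (x : P) (c : (constMod k I hI.2.1).space x), h.app x (g.app x c) = 0 := by
  intro x c
  by_cases hx : x ∈ I
  · refine (h.comp g).app_eq_zero_of_coeff_eq_zero hx (by_contra fun hne => ?_) c
    have hsub : I ⊆ J := PersHom.subset_of_coeff_comp_ne_zero hI.2.2 g h hx hne
    have hxJ : x ∈ J := hsub hx
    have hne' : (g.comp h).coeff hxJ ≠ 0 := by
      rwa [h.coeff_comp g hxJ hx, mul_comm, ← g.coeff_comp h hx hxJ]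
    exact hIJ (hsub.antisymm (PersHom.subset_of_coeff_comp_ne_zero hJ.2.2 h g hxJ hne'))
  · obtain rfl : c = 0 := constSub_eq_zero hx c
    simp
end

section
/- (Steinberg's lemma.) Let E be a finite dimensional k-vector space, and let F and G be flags in E. Then there exists a basis of E which is compatible with both F and G. -/
/-!
The basis is built upwards, one member of `F` at a time: a basis of the current member is
extended to a basis of the next one while staying compatible with `G`. Inside a target
subspace `H`, that extension first adds vectors from `T ⊓ H`, where `T` is the smallest
member of `G` with `T ⊓ H` not yet spanned. Compatibility with the members of `G` above `T`
survives by the modular law, and the members below `T` are already spanned within `H`, so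
no later vector can break compatibility with them.
-/

universe u v

open Submodule Set

/-- Compatibility relative to `span R B`; for a spanning `B` it is the usual notion. -/
def IsCompatible {R M : Type*} [Semiring R] [AddCommMonoid M] [Module R M]
    (B : Set M) (S : Submodule R M) : Prop :=
  span R (B ∩ S) = S ⊓ span R B

section Compatible

variable {R M : Type*} [Semiring R] [AddCommMonoid M] [Module R M] {B B' : Set M}
  {S : Submodule R M}

theorem isCompatible_iff_le : IsCompatible B S ↔ S ⊓ span R B ≤ span R (B ∩ S) :=
  ⟨Eq.ge, fun h =>
    le_antisymm (le_inf (span_le.2 inter_subset_right) (span_mono inter_subset_left)) h⟩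

theorem isCompatible_empty (S : Submodule R M) : IsCompatible (∅ : Set M) S := by
  simp [IsCompatible]

theorem isCompatible_of_span_le (h : span R B ≤ S) : IsCompatible B S :=
  isCompatible_iff_le.2 <| inf_le_right.trans (span_mono (subset_inter subset_rfl (span_le.1 h)))

theorem IsCompatible.of_inf_span_le (hB' : IsCompatible B' S) (hB'B : B' ⊆ B)
    (h : S ⊓ span R B ≤ span R B') : IsCompatible B S :=
  isCompatible_iff_le.2 <| (le_inf inf_le_left h).trans <|
    hB'.ge.trans (span_mono (inter_subset_inter_left _ hB'B))

end Compatible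

theorem IsCompatible.of_subset_union {R M : Type*} [Ring R] [AddCommGroup M] [Module R M]
    {B B' : Set M} {S : Submodule R M} (hB' : IsCompatible B' S) (hB'B : B' ⊆ B)
    (hB : B ⊆ B' ∪ S) : IsCompatible B S := by
  refine isCompatible_iff_le.2 ?_
  have hsplit : B ⊆ B' ∪ (B ∩ S) := fun x hx => (hB hx).imp id fun hxS => ⟨hx, hxS⟩
  calc S ⊓ span R B ≤ S ⊓ (span R B' ⊔ span R (B ∩ S)) := by
        rw [← span_union]; exact inf_le_inf_left _ (span_mono hsplit)
    _ = S ⊓ span R B' ⊔ span R (B ∩ S) :=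
        (inf_sup_assoc_of_le _ (span_le.2 inter_subset_right)).symm
    _ ≤ span R (B ∩ S) := by
        rw [← hB']; exact sup_le (span_mono (inter_subset_inter_left _ hB'B)) le_rfl

theorem IsChain.exists_isLeast {α : Type*} [Preorder α] [WellFoundedLT α] {s : Set α}
    (hs : IsChain (· ≤ ·) s) (hne : s.Nonempty) : ∃ a, IsLeast s a :=
  let ⟨a, ha, hmin⟩ := wellFounded_lt.has_min s hne
  ⟨a, ha, fun b hb => hs.le_of_not_gt hb ha (hmin b hb)⟩

section Extension

variable {K V : Type*} [DivisionRing K] [AddCommGroup V] [Module K V]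

theorem exists_linearIndepOn_extension_span_eq_sup {B' : Set V} (hB' : LinearIndepOn K id B')
    (W : Submodule K V) :
    ∃ B, B' ⊆ B ∧ B ⊆ B' ∪ W ∧ LinearIndepOn K id B ∧ span K B = span K B' ⊔ W := by
  obtain ⟨B, hBW, hB'B, hWB, hB⟩ := exists_linearIndepOn_id_extension hB' subset_union_left
  refine ⟨B, hB'B, hBW, hB, ?_⟩
  rw [← span_eq W, ← span_union]
  exact le_antisymm (span_mono hBW) (span_le.2 hWB)

variable [FiniteDimensional K V]

theorem exists_extension_compatible_with_chain {G : Set (Submodule K V)}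
    (hG : IsChain (· ≤ ·) G) {H : Submodule K V} {B' : Set V} (hB' : LinearIndepOn K id B')
    (hB'H : span K B' ≤ H) (hB'G : ∀ S ∈ G, IsCompatible B' S) :
    ∃ B, B' ⊆ B ∧ LinearIndepOn K id B ∧ span K B = H ∧ ∀ S ∈ G, IsCompatible B S := by
  induction hW : span K B' using WellFoundedGT.induction generalizing B' with
  | _ _ ih =>
    subst hW
    rcases hB'H.eq_or_lt with heq | hlt
    · exact ⟨B', subset_rfl, hB', heq, hB'G⟩
    obtain ⟨T, ⟨-, hTB'⟩, hTle⟩ : ∃ T, IsLeast {S ∈ insert ⊤ G | ¬ S ⊓ H ≤ span K B'} T :=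
      ((hG.insert fun _ _ _ => Or.inr le_top).mono (sep_subset _ _)).exists_isLeast
        ⟨⊤, mem_insert _ _, by simpa using hlt.not_ge⟩
    obtain ⟨B₁, hB'B₁, hB₁, hB₁li, hB₁span⟩ :=
      exists_linearIndepOn_extension_span_eq_sup hB' (T ⊓ H)
    have hB₁H : span K B₁ ≤ H := hB₁span ▸ sup_le hB'H inf_le_right
    have hB₁G : ∀ S ∈ G, IsCompatible B₁ S := by
      intro S hS
      by_cases hSH : S ⊓ H ≤ span K B'
      · exact (hB'G S hS).of_inf_span_le hB'B₁ ((inf_le_inf_left S hB₁H).trans hSH)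
      · have hTS : T ≤ S := hTle ⟨mem_insert_of_mem _ hS, hSH⟩
        exact (hB'G S hS).of_subset_union hB'B₁
          (hB₁.trans (union_subset_union_right _ fun x hx => hTS hx.1))
    obtain ⟨B, hB₁B, hB, hBspan, hBG⟩ :=
      ih _ (hB₁span ▸ left_lt_sup.2 hTB') hB₁li hB₁H hB₁G rfl
    exact ⟨B, hB'B₁.trans hB₁B, hB, hBspan, hBG⟩

theorem exists_spanning_extension_compatible_with_two_chains {F G : Set (Submodule K V)}
    (hF : IsChain (· ≤ ·) F) (hG : IsChain (· ≤ ·) G) {B' : Set V}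
    (hB' : LinearIndepOn K id B') (hB'F : ∀ S ∈ F, IsCompatible B' S)
    (hB'G : ∀ S ∈ G, IsCompatible B' S) (hFB' : ∀ S ∈ F, S ≤ span K B' ∨ span K B' ≤ S) :
    ∃ B, LinearIndepOn K id B ∧ span K B = ⊤ ∧
      (∀ S ∈ F, IsCompatible B S) ∧ ∀ S ∈ G, IsCompatible B S := by
  induction hW : span K B' using WellFoundedGT.induction generalizing B' with
  | _ _ ih =>
    subst hW
    rcases eq_or_ne (span K B') ⊤ with htop | hne
    · exact ⟨B', hB', htop, hB'F, hB'G⟩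
    have hF' : IsChain (· ≤ ·) (insert ⊤ F) := hF.insert fun _ _ _ => Or.inr le_top
    obtain ⟨T, ⟨hT, hTB'⟩, hTle⟩ : ∃ T, IsLeast {S ∈ insert ⊤ F | ¬ S ≤ span K B'} T :=
      (hF'.mono (sep_subset _ _)).exists_isLeast
        ⟨⊤, mem_insert _ _, fun h => hne (top_le_iff.1 h)⟩
    have hB'T : span K B' < T := by
      rcases hT with rfl | hT
      · exact lt_top_iff_ne_top.2 hne
      · exact ((hFB' T hT).resolve_left hTB').lt_of_not_ge hTB'
    obtain ⟨B₁, hB'B₁, hB₁, hB₁span, hB₁G⟩ :=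
      exists_extension_compatible_with_chain hG hB' hB'T.le hB'G
    have hB₁F : ∀ S ∈ F, IsCompatible B₁ S := by
      intro S hS
      by_cases hSB' : S ≤ span K B'
      · exact (hB'F S hS).of_inf_span_le hB'B₁ (inf_le_left.trans hSB')
      · exact isCompatible_of_span_le (hB₁span ▸ hTle ⟨mem_insert_of_mem _ hS, hSB'⟩)
    have hFB₁ : ∀ S ∈ F, S ≤ span K B₁ ∨ span K B₁ ≤ S :=
      fun S hS => hB₁span ▸ hF'.total (mem_insert_of_mem _ hS) hT
    exact ih _ (hB₁span ▸ hB'T) hB₁ hB₁F hB₁G hFB₁ rfl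

end Extension

/-- Steinberg's lemma: given two flags (chains of subspaces) `F` and `G` in a finite
dimensional vector space `E`, there is a basis `B` of `E` compatible with both flags,
i.e. for every subspace `S` in either flag, `B ∩ S` is a basis of `S`. -/
theorem exists_basis_compatible_with_two_flags
    (k : Type u) [Field k] (E : Type v) [AddCommGroup E] [Module k E]
    [FiniteDimensional k E]
    (F G : Set (Submodule k E))
    (hF : IsChain (· ≤ ·) F) (hG : IsChain (· ≤ ·) G) :
    ∃ B : Set E,
      LinearIndependent k ((↑) : B → E) ∧ Submodule.span k B = ⊤ ∧
      (∀ S ∈ F, Submodule.span k (B ∩ S) = S) ∧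
      (∀ S ∈ G, Submodule.span k (B ∩ S) = S) := by
  obtain ⟨B, hB, hBspan, hBF, hBG⟩ := exists_spanning_extension_compatible_with_two_chains hF hG
    (linearIndependent_empty k E) (fun S _ => isCompatible_empty S)
    (fun S _ => isCompatible_empty S) (fun S _ => Or.inr (by simp))
  have hspan_inter {S : Submodule k E} (hS : IsCompatible B S) : span k (B ∩ S) = S := by
    rw [hS, hBspan, inf_top_eq]
  exact ⟨B, hB, hBspan, fun S hS => hspan_inter (hBF S hS), fun S hS => hspan_inter (hBG S hS)⟩
end
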